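/- Logarithmic interpolation inequality in sequence form: let (c_j)_{j∈ℤ} be nonnegative with c_j ≤ min(2^j A, 2^{−j} B) for positive reals A, B, and let S = sup_j c_j. Then ∑_{j∈ℤ} c_j ≤ C·S·(1 + log(e + (A + B)/S)) for a universal constant C. -/

import Mathlib

/-- Finite geometric tail bound: a sum of `2^(-j)` over integers `j > N` is at most `2^(-N)`. -/
lemma geo_tail (N : ℤ) (t : Finset ℤ) (ht : ∀ j ∈ t, N < j) :
    ∑ j ∈ t, (2:ℝ)^(-j) ≤ (2:ℝ)^(-N) := by
  have h2 : (2:ℝ) ≠ 0 := two_ne_zero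
  have key : ∑ j ∈ t, (2:ℝ)^(-j)
      = ∑ n ∈ t.image (fun j => (j - (N+1)).toNat), (2:ℝ)^(-(N+1)) * (1/2:ℝ)^n := by
    have hinj : ∀ a ∈ t, ∀ b ∈ t, (a - (N+1)).toNat = (b - (N+1)).toNat → a = b := by
      intro a ha b hb hab
      have h1 := ht a ha; have h2 := ht b hb; omega
    rw [Finset.sum_image hinj]
    refine Finset.sum_congr rfl fun j hj => ?_
    have hjN := ht j hj
    have h0 : (0:ℤ) ≤ j - (N+1) := by omega
    have : ((1:ℝ)/2)^((j - (N+1)).toNat) = (2:ℝ)^(-(j - (N+1))) := by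
      rw [one_div, inv_pow, ← zpow_natCast, ← zpow_neg, Int.toNat_of_nonneg h0]
    rw [this, ← zpow_add₀ h2]
    ring_nf
  rw [key, ← Finset.mul_sum]
  have hsum : ∑ n ∈ t.image (fun j => (j - (N+1)).toNat), ((1:ℝ)/2)^n ≤ 2 := by
    have hts : Summable (fun n : ℕ => ((1:ℝ)/2)^n) :=
      summable_geometric_of_lt_one (by norm_num) (by norm_num)
    calc ∑ n ∈ t.image (fun j => (j - (N+1)).toNat), ((1:ℝ)/2)^n
        ≤ ∑' n : ℕ, ((1:ℝ)/2)^n :=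
          Summable.sum_le_tsum _ (fun n _ => by positivity) hts
      _ = 2 := by rw [tsum_geometric_of_lt_one (by norm_num) (by norm_num)]; norm_num
  calc (2:ℝ)^(-(N+1)) * ∑ n ∈ t.image (fun j => (j - (N+1)).toNat), ((1:ℝ)/2)^n
      ≤ (2:ℝ)^(-(N+1)) * 2 := by
        exact mul_le_mul_of_nonneg_left hsum (by positivity)
    _ = (2:ℝ)^(-N) := by
        rw [show -N = -(N+1)+1 by ring, zpow_add_one₀ h2]

theorem stmt_12 :
    ∃ C : ℝ, 0 < C ∧
      ∀ (c : ℤ → ℝ) (A B S : ℝ), 0 < A → 0 < B → 0 < S →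
        (∀ j, 0 ≤ c j) →
        (∀ j : ℤ, c j ≤ min ((2:ℝ)^j * A) ((2:ℝ)^(-j) * B)) →
        (∀ j, c j ≤ S) →
        ∑' j : ℤ, c j ≤ C * S * (1 + Real.log (Real.exp 1 + (A + B) / S)) := by
  refine ⟨8, by norm_num, ?_⟩
  intro c A B S hA hB hS hc0 hmin hcS
  set x := (A+B)/S with hx
  have hx0 : 0 < x := div_pos (by linarith) hS
  set L := Real.log (Real.exp 1 + x) with hL
  have hL1 : 1 ≤ L := by
    rw [hL]
    calc (1:ℝ) = Real.log (Real.exp 1) := (Real.log_exp 1).symm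
      _ ≤ _ := Real.log_le_log (Real.exp_pos 1) (by linarith)
  set N : ℕ := ⌈Real.logb 2 x⌉₊ with hN
  have hxN : x ≤ (2:ℝ)^N := by
    calc x = (2:ℝ) ^ Real.logb 2 x := (Real.rpow_logb two_pos (by norm_num) hx0).symm
      _ ≤ (2:ℝ) ^ ((N:ℕ):ℝ) := Real.rpow_le_rpow_of_exponent_le one_le_two (Nat.le_ceil _)
      _ = (2:ℝ)^N := Real.rpow_natCast 2 N
  have hlog2 : (2/3 : ℝ) < Real.log 2 := by
    have := Real.log_two_gt_d9; linarith
  have hNle : (N:ℝ) ≤ 1 + (3/2) * L := by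
    by_cases h : Real.logb 2 x ≤ 0
    · have hN0 : N = 0 := by rw [hN]; exact Nat.ceil_eq_zero.mpr h
      rw [hN0]; push_cast; nlinarith
    · push_neg at h
      have h1 : (N:ℝ) < Real.logb 2 x + 1 := by
        rw [hN]; exact Nat.ceil_lt_add_one h.le
      have h2 : Real.logb 2 x ≤ L / Real.log 2 := by
        rw [Real.logb]
        have hlx : Real.log x ≤ L := by
          rw [hL]; exact Real.log_le_log hx0 (by linarith [Real.exp_pos 1])
        exact div_le_div_of_nonneg_right hlx (by linarith)
      have h3 : L / Real.log 2 ≤ (3/2) * L := by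
        rw [div_le_iff₀ (by linarith)]
        nlinarith
      linarith
  have hRHS0 : (0:ℝ) ≤ 8 * S * (1 + L) := by positivity
  apply tsum_le_of_sum_le' hRHS0
  intro s
  classical
  -- split s into middle, high, low parts
  have hsplit : ∑ j ∈ s, c j
      = ∑ j ∈ s.filter (fun j => -(N:ℤ) ≤ j ∧ j ≤ (N:ℤ)), c j
        + (∑ j ∈ (s.filter (fun j => ¬(-(N:ℤ) ≤ j ∧ j ≤ (N:ℤ)))).filter (fun j => (N:ℤ) < j), c j
        + ∑ j ∈ (s.filter (fun j => ¬(-(N:ℤ) ≤ j ∧ j ≤ (N:ℤ)))).filter (fun j => ¬((N:ℤ) < j)), c j) := by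
    rw [Finset.sum_filter_add_sum_filter_not, Finset.sum_filter_add_sum_filter_not]
  have hmid : ∑ j ∈ s.filter (fun j => -(N:ℤ) ≤ j ∧ j ≤ (N:ℤ)), c j ≤ (2*N+1 : ℝ) * S := by
    calc ∑ j ∈ s.filter (fun j => -(N:ℤ) ≤ j ∧ j ≤ (N:ℤ)), c j
        ≤ ∑ _j ∈ s.filter (fun j => -(N:ℤ) ≤ j ∧ j ≤ (N:ℤ)), S :=
          Finset.sum_le_sum fun j _ => hcS j
      _ = ((s.filter (fun j => -(N:ℤ) ≤ j ∧ j ≤ (N:ℤ))).card : ℝ) * S := by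
          rw [Finset.sum_const, nsmul_eq_mul]
      _ ≤ (2*N+1 : ℝ) * S := by
          refine mul_le_mul_of_nonneg_right ?_ hS.le
          have hsub : s.filter (fun j => -(N:ℤ) ≤ j ∧ j ≤ (N:ℤ)) ⊆ Finset.Icc (-(N:ℤ)) N := by
            intro j hj
            rw [Finset.mem_filter] at hj
            exact Finset.mem_Icc.mpr hj.2
          have hcard : (s.filter (fun j => -(N:ℤ) ≤ j ∧ j ≤ (N:ℤ))).card ≤ 2*N+1 := by
            calc _ ≤ (Finset.Icc (-(N:ℤ)) N).card := Finset.card_le_card hsub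
              _ = 2*N+1 := by rw [Int.card_Icc]; omega
          exact_mod_cast hcard
  have hhigh : ∀ (t : Finset ℤ), (∀ j ∈ t, (N:ℤ) < j) →
      ∑ j ∈ t, c j ≤ (2:ℝ)^(-(N:ℤ)) * B := by
    intro t ht
    calc ∑ j ∈ t, c j ≤ ∑ j ∈ t, (2:ℝ)^(-j) * B :=
          Finset.sum_le_sum fun j _ => (hmin j).trans (min_le_right _ _)
      _ = (∑ j ∈ t, (2:ℝ)^(-j)) * B := by rw [Finset.sum_mul]
      _ ≤ (2:ℝ)^(-(N:ℤ)) * B :=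
          mul_le_mul_of_nonneg_right (geo_tail _ _ ht) hB.le
  have hlow : ∀ (t : Finset ℤ), (∀ j ∈ t, j < -(N:ℤ)) →
      ∑ j ∈ t, c j ≤ (2:ℝ)^(-(N:ℤ)) * A := by
    intro t ht
    have heq : ∑ j ∈ t, (2:ℝ)^j = ∑ k ∈ t.image (fun j => -j), (2:ℝ)^(-k) := by
      rw [Finset.sum_image (by intro a _ b _ hab; exact neg_injective hab)]
      simp
    calc ∑ j ∈ t, c j ≤ ∑ j ∈ t, (2:ℝ)^j * A :=
          Finset.sum_le_sum fun j _ => (hmin j).trans (min_le_left _ _)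
      _ = (∑ j ∈ t, (2:ℝ)^j) * A := by rw [Finset.sum_mul]
      _ ≤ (2:ℝ)^(-(N:ℤ)) * A := by
          refine mul_le_mul_of_nonneg_right ?_ hA.le
          rw [heq]
          refine geo_tail _ _ ?_
          intro k hk
          rw [Finset.mem_image] at hk
          obtain ⟨j, hj, rfl⟩ := hk
          have := ht j hj; omega
  have htail : (2:ℝ)^(-(N:ℤ)) * B + (2:ℝ)^(-(N:ℤ)) * A ≤ S := by
    have hAB : A + B ≤ (2:ℝ)^N * S := by
      rw [hx] at hxN
      calc A + B = ((A+B)/S) * S := by field_simp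
        _ ≤ (2:ℝ)^N * S := mul_le_mul_of_nonneg_right hxN hS.le
    have hpow : (2:ℝ)^(-(N:ℤ)) * (2:ℝ)^N = 1 := by
      rw [← zpow_natCast (2:ℝ) N, ← zpow_add₀ (two_ne_zero)]
      norm_num
    have hp0 : (0:ℝ) < (2:ℝ)^(-(N:ℤ)) := by positivity
    calc (2:ℝ)^(-(N:ℤ)) * B + (2:ℝ)^(-(N:ℤ)) * A = (2:ℝ)^(-(N:ℤ)) * (A + B) := by ring
      _ ≤ (2:ℝ)^(-(N:ℤ)) * ((2:ℝ)^N * S) := mul_le_mul_of_nonneg_left hAB hp0.le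
      _ = S := by rw [← mul_assoc, hpow, one_mul]
  have hbig : ∑ j ∈ s, c j ≤ (2*N+1 : ℝ) * S + S := by
    rw [hsplit]
    have hc2 : ∀ j ∈ (s.filter (fun j => ¬(-(N:ℤ) ≤ j ∧ j ≤ (N:ℤ)))).filter (fun j => (N:ℤ) < j), (N:ℤ) < j := by
      intro j hj
      simp only [Finset.mem_filter] at hj
      exact hj.2
    have hc3 : ∀ j ∈ (s.filter (fun j => ¬(-(N:ℤ) ≤ j ∧ j ≤ (N:ℤ)))).filter (fun j => ¬((N:ℤ) < j)), j < -(N:ℤ) := by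
      intro j hj
      simp only [Finset.mem_filter, not_and, not_le, not_lt] at hj
      omega
    have h2 := hhigh _ hc2
    have h3 := hlow _ hc3
    linarith
  calc ∑ j ∈ s, c j ≤ (2*N+1 : ℝ) * S + S := hbig
    _ ≤ 8 * S * (1 + L) := by nlinarith
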